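/- arXiv:1110.1826 — 5 statements merged into one kernel-verified Lean document; each statement's English description precedes it below -/
import Mathlib

section
/- Let A and B be two disjoint bases of a matroid M. For every a ∈ A there exists b ∈ B such that both (A - a) + b and (B - b) + a are bases of M. -/
open Set

/-- A circuit of a matroid: a minimal dependent set. -/
def IsCircuitOf {α : Type*} (M : Matroid α) (C : Set α) : Prop :=
  M.Dep C ∧ ∀ D, D ⊂ C → ¬ M.Dep D

/-- The support `C(I,x)` of `x` in `I`: the set of elements of `I` lying in a circuit
contained in `insert x I` and containing `x` (for a base `I` and `x ∉ I` with `insert x I`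
dependent this is the fundamental circuit of `x` with respect to `I`, minus `x`). -/
def suppOf {α : Type*} (M : Matroid α) (I : Set α) (x : α) : Set α :=
  {y ∈ I | ∃ C ⊆ insert x I, IsCircuitOf M C ∧ x ∈ C ∧ y ∈ C}

/-!
The fundamental circuit of `a` with respect to `B` and the fundamental cocircuit of `a` with
respect to `A` both contain `a`. A circuit and a cocircuit never meet in exactly one element, so
they share some `b ≠ a`; lying in the circuit lets `a` replace `b` in `B`, and lying in the
cocircuit lets `b` replace `a` in `A`.
-/

namespace Matroid

variable {α : Type*} {M : Matroid α} {B : Set α} {e f : α}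

lemma IsBase.insert_sdiff_singleton_isBase_of_mem_fundCircuit (hB : M.IsBase B) (heE : e ∈ M.E)
    (heB : e ∉ B) (hfB : f ∈ B) (hf : f ∈ M.fundCircuit e B) :
    M.IsBase (insert e (B \ {f})) := by
  rw [hB.indep.mem_fundCircuit_iff (by rwa [hB.closure_eq]) heB,
    ← insert_sdiff_singleton_comm (ne_of_mem_of_not_mem hfB heB).symm] at hf
  exact hB.exchange_isBase_of_indep heB hf

lemma IsBase.insert_sdiff_singleton_isBase_of_mem_fundCocircuit (hB : M.IsBase B) (heB : e ∈ B)
    (hf : f ∈ M.fundCocircuit e B) (hfe : f ≠ e) :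
    M.IsBase (insert f (B \ {e})) := by
  obtain ⟨hfE, hfB⟩ : f ∈ M.E \ B := by
    simpa [hfe] using M.fundCocircuit_subset_insert_compl e B hf
  exact hB.insert_sdiff_singleton_isBase_of_mem_fundCircuit hfE hfB heB
    (hB.mem_fundCocircuit_iff_mem_fundCircuit.1 hf)

end Matroid

theorem single_symmetric_exchange {α : Type*} (M : Matroid α) (A B : Set α)
    (hA : M.IsBase A) (hB : M.IsBase B) (hAB : Disjoint A B) :
    ∀ a ∈ A, ∃ b ∈ B,
      M.IsBase (insert b (A \ {a})) ∧ M.IsBase (insert a (B \ {b})) := by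
  intro a ha
  have haB : a ∉ B := hAB.notMem_of_mem_left ha
  have hCK : (M.fundCircuit a B ∩ M.fundCocircuit a A).Nontrivial :=
    (hB.fundCircuit_isCircuit (hA.subset_ground ha) haB).isCocircuit_inter_nontrivial
      (Matroid.fundCocircuit_isCocircuit ha hA)
      ⟨a, M.mem_fundCircuit a B, M.mem_fundCocircuit a A⟩
  obtain ⟨b, ⟨hbC, hbK⟩, hba⟩ := hCK.exists_ne a
  have hbB : b ∈ B := by simpa [hba] using M.fundCircuit_subset_insert a B hbC
  exact ⟨b, hbB, hA.insert_sdiff_singleton_isBase_of_mem_fundCocircuit ha hbK hba,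
    hB.insert_sdiff_singleton_isBase_of_mem_fundCircuit (hA.subset_ground ha) haB hbB hbC⟩
end

section
/- Let A and B be two disjoint bases of a matroid M of rank greater than 1. Then there exist two disjoint symmetric exchanges relative to A and B: that is, there exist a₁, a₂ ∈ A with a₁ ≠ a₂ and b₁, b₂ ∈ B with b₁ ≠ b₂ such that (A - a₁) + b₁ and (B - b₁) + a₁ are bases, and (A - a₂) + b₂ and (B - b₂) + a₂ are bases. -/
open Set

/-!
Every `a ∈ A \ B` has a symmetric exchange partner `b ∈ B`: the fundamental circuit of `a`
with respect to `B` meets the cocircuit `E \ cl (A \ {a})` in `a`, hence in a second element `b`,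
and that `b` is the partner. By symmetry every `b ∈ B \ A` has a partner in `A` too, so when `A`
and `B` are disjoint the exchange relation is a bipartite graph on `A ⊔ B` without isolated
vertices. Any such graph with at least two vertices on each side has a matching of size two.
-/

theorem Set.exists_two_disjoint_related_pairs {α β : Type*} {A : Set α} {B : Set β}
    (r : α → β → Prop) (hA : A.Nontrivial) (hB : B.Nontrivial)
    (hAr : ∀ a ∈ A, ∃ b ∈ B, r a b) (hBr : ∀ b ∈ B, ∃ a ∈ A, r a b) :
    ∃ a₁ ∈ A, ∃ a₂ ∈ A, ∃ b₁ ∈ B, ∃ b₂ ∈ B, a₁ ≠ a₂ ∧ b₁ ≠ b₂ ∧ r a₁ b₁ ∧ r a₂ b₂ := by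
  obtain ⟨a₁, ha₁A⟩ := hA.nonempty
  obtain ⟨b₁, hb₁B, hr₁₁⟩ := hAr a₁ ha₁A
  obtain ⟨b₂, hb₂B, hb₂₁⟩ := hB.exists_ne b₁
  obtain ⟨a, haA, hr₂⟩ := hBr b₂ hb₂B
  obtain hne | rfl := ne_or_eq a₁ a
  · exact ⟨a₁, ha₁A, a, haA, b₁, hb₁B, b₂, hb₂B, hne, hb₂₁.symm, hr₁₁, hr₂⟩
  obtain ⟨a₂, ha₂A, ha₂₁⟩ := hA.exists_ne a₁
  obtain ⟨b, hbB, hr⟩ := hAr a₂ ha₂A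
  obtain hne | rfl := ne_or_eq b₁ b
  · exact ⟨a₁, ha₁A, a₂, ha₂A, b₁, hb₁B, b, hbB, ha₂₁.symm, hne, hr₁₁, hr⟩
  · exact ⟨a₁, ha₁A, a₂, ha₂A, b₂, hb₂B, b₁, hbB, ha₂₁.symm, hb₂₁, hr₂, hr⟩

namespace Matroid

variable {α : Type*} {M : Matroid α} {A B : Set α} {a : α}

theorem IsBase.exists_symmetric_exchange (hA : M.IsBase A) (hB : M.IsBase B)
    (haA : a ∈ A) (haB : a ∉ B) :
    ∃ b ∈ B, M.IsBase (insert b (A \ {a})) ∧ M.IsBase (insert a (B \ {b})) := by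
  have haE : a ∈ M.E := hA.subset_ground haA
  have hC : M.IsCircuit (M.fundCircuit a B) := hB.fundCircuit_isCircuit haE haB
  have hK : M.IsCocircuit (M.E \ M.closure (A \ {a})) :=
    hA.compl_closure_sdiff_singleton_isCocircuit haA
  have ha_mem : a ∈ M.fundCircuit a B ∩ (M.E \ M.closure (A \ {a})) :=
    ⟨M.mem_fundCircuit a B, haE, hA.indep.notMem_closure_sdiff_of_mem haA⟩
  obtain ⟨b, ⟨hbC, hbE, hb_cl⟩, hba⟩ :=
    (hC.isCocircuit_inter_nontrivial hK ⟨a, ha_mem⟩).exists_ne a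
  have hbB : b ∈ B := (mem_insert_iff.1 (M.fundCircuit_subset_insert a B hbC)).resolve_left hba
  have hindep : M.Indep (insert a B \ {b}) :=
    (hB.indep.mem_fundCircuit_iff (by rwa [hB.closure_eq]) haB).1 hbC
  refine ⟨b, hbB, hA.exchange_base_of_notMem_closure haA hb_cl hbE, ?_⟩
  rw [insert_sdiff_singleton_comm hba.symm]
  exact hB.exchange_isBase_of_indep' hbB haB hindep

end Matroid

theorem two_disjoint_symmetric_exchanges_general {α : Type*} (M : Matroid α) (A B : Set α)
    (hA : M.IsBase A) (hB : M.IsBase B) (hAB : Disjoint A B)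
    (hrk : 1 < A.ncard) :
    ∃ a₁ ∈ A, ∃ a₂ ∈ A, ∃ b₁ ∈ B, ∃ b₂ ∈ B, a₁ ≠ a₂ ∧ b₁ ≠ b₂ ∧
      M.IsBase (insert b₁ (A \ {a₁})) ∧ M.IsBase (insert a₁ (B \ {b₁})) ∧
      M.IsBase (insert b₂ (A \ {a₂})) ∧ M.IsBase (insert a₂ (B \ {b₂})) := by
  have hAnt : A.Nontrivial := (one_lt_ncard_iff_nontrivial_and_finite.1 hrk).1
  have hBnt : B.Nontrivial := by
    rw [← hB.ncard_eq_ncard_of_isBase hA] at hrk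
    exact (one_lt_ncard_iff_nontrivial_and_finite.1 hrk).1
  obtain ⟨a₁, ha₁, a₂, ha₂, b₁, hb₁, b₂, hb₂, ha, hb, ⟨h₁, h₁'⟩, ⟨h₂, h₂'⟩⟩ :=
    exists_two_disjoint_related_pairs
      (fun a b ↦ M.IsBase (insert b (A \ {a})) ∧ M.IsBase (insert a (B \ {b}))) hAnt hBnt
      (fun a ha ↦ hA.exists_symmetric_exchange hB ha (hAB.notMem_of_mem_left ha))
      (fun b hb ↦ (hB.exists_symmetric_exchange hA hb (hAB.notMem_of_mem_right hb)).imp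
        fun _ ⟨haA, hex⟩ ↦ ⟨haA, hex.symm⟩)
  exact ⟨a₁, ha₁, a₂, ha₂, b₁, hb₁, b₂, hb₂, ha, hb, h₁, h₁', h₂, h₂'⟩

theorem two_disjoint_symmetric_exchanges {α : Type*} (M : Matroid α) (A B : Set α)
    (hA : M.IsBase A) (hB : M.IsBase B) (hAB : Disjoint A B)
    (hE : M.E.Finite) (hrk : 1 < A.ncard) :
    ∃ a₁ ∈ A, ∃ a₂ ∈ A, ∃ b₁ ∈ B, ∃ b₂ ∈ B, a₁ ≠ a₂ ∧ b₁ ≠ b₂ ∧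
      M.IsBase (insert b₁ (A \ {a₁})) ∧ M.IsBase (insert a₁ (B \ {b₁})) ∧
      M.IsBase (insert b₂ (A \ {a₂})) ∧ M.IsBase (insert a₂ (B \ {b₂})) :=
  two_disjoint_symmetric_exchanges_general M A B hA hB hAB hrk
end

section
/- Let A and B be two disjoint bases of a matroid M, and let a', a'' be two distinct elements of A. Define Conn(a',a'',A,B) = { b ∈ B : b ∈ C(B,a') and a'' ∈ C(A,b) }, where C(I,x) denotes the fundamental circuit of x with respect to the base I with x removed (the support of x in I). Then |Conn(a',a'',A,B)| ≠ 1. -/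
open Set

/-!
Suppose `b₀` is the only element of `Conn(a', a'', A, B)` and put `X = A - a''`.
Every other `b ∈ C(B, a')` has `a'' ∉ C(A, b)`, so its fundamental circuit with respect to `A`
avoids `a''` and `b ∈ cl X`. Since `a' ∈ X` as well, the circuit through `a'` and `b₀` puts
`b₀` in `cl X`; then the circuit through `b₀` and `a''` puts `a''` in `cl X`, contradicting the
independence of `A`.
-/

section

open Matroid

variable {α : Type*} {M : Matroid α} {C I : Set α} {x y : α}

lemma isCircuitOf_iff_isCircuit : IsCircuitOf M C ↔ M.IsCircuit C := by
  rw [isCircuit_iff_forall_ssubset]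
  refine and_congr_right fun hC ↦ forall₂_congr fun D hDC ↦ ?_
  exact not_dep_iff (hDC.subset.trans hC.subset_ground)

lemma suppOf_subset : suppOf M I x ⊆ I :=
  fun _ hy ↦ hy.1

lemma suppOf_subset_ground : suppOf M I x ⊆ M.E := by
  rintro y ⟨-, C, -, hC, -, hyC⟩
  exact hC.1.subset_ground hyC

lemma mem_closure_insert_suppOf_sdiff (hy : y ∈ suppOf M I x) :
    y ∈ M.closure (insert x (suppOf M I x \ {y})) := by
  obtain ⟨-, C, hCI, hC, hxC, hyC⟩ := hy
  refine M.closure_subset_closure (fun z hz ↦ ?_)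
    ((isCircuitOf_iff_isCircuit.1 hC).mem_closure_sdiff_singleton_of_mem hyC)
  obtain ⟨hzC, hzy⟩ := hz
  rcases hCI hzC with rfl | hzI
  · exact mem_insert _ _
  · exact mem_insert_of_mem _ ⟨⟨hzI, C, hCI, hC, hxC, hzC⟩, hzy⟩

lemma Matroid.Indep.mem_closure_sdiff_of_notMem_suppOf (hI : M.Indep I)
    (hx : x ∈ M.closure I) (hxI : x ∉ I) (hy : y ∉ suppOf M I x) :
    x ∈ M.closure (I \ {y}) := by
  have hC := hI.fundCircuit_isCircuit hx hxI
  have hCI := M.fundCircuit_subset_insert x I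
  refine M.closure_subset_closure (fun z hz ↦ ?_)
    (hC.mem_closure_sdiff_singleton_of_mem (M.mem_fundCircuit x I))
  obtain ⟨hzC, hzx⟩ := hz
  have hzI : z ∈ I := (hCI hzC).resolve_left hzx
  refine ⟨hzI, fun hzy ↦ hy ?_⟩
  rw [mem_singleton_iff] at hzy
  subst hzy
  exact ⟨hzI, _, hCI, isCircuitOf_iff_isCircuit.2 hC, M.mem_fundCircuit x I, hzC⟩

end

theorem conn_not_singleton_general {α : Type*} (M : Matroid α) (A B : Set α)
    (hA : M.IsBase A) (hAB : Disjoint A B)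
    (a' a'' : α) (ha' : a' ∈ A) (ha'' : a'' ∈ A) (hne : a' ≠ a'') :
    {b ∈ B | b ∈ suppOf M B a' ∧ a'' ∈ suppOf M A b}.encard ≠ 1 := by
  rw [Ne, encard_eq_one]
  rintro ⟨b₀, hconn⟩
  obtain ⟨-, hb₀, ha''b₀⟩ : b₀ ∈ {b ∈ B | b ∈ suppOf M B a' ∧ a'' ∈ suppOf M A b} := hconn ▸ rfl
  set X := A \ {a''}
  have hXcl : X ⊆ M.closure X := M.subset_closure X (sdiff_subset.trans hA.subset_ground)
  have hsupp_cl : suppOf M B a' \ {b₀} ⊆ M.closure X := by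
    rintro b ⟨hb, hbb₀⟩
    have hbB : b ∈ B := suppOf_subset hb
    refine hA.indep.mem_closure_sdiff_of_notMem_suppOf ?_ (hAB.notMem_of_mem_right hbB)
      fun ha''b ↦ hbb₀ ?_
    · rw [hA.closure_eq]
      exact suppOf_subset_ground hb
    · have hb_conn : b ∈ {b ∈ B | b ∈ suppOf M B a' ∧ a'' ∈ suppOf M A b} := ⟨hbB, hb, ha''b⟩
      rwa [hconn] at hb_conn
  have hb₀X : b₀ ∈ M.closure X :=
    M.closure_subset_closure_of_subset_closure (insert_subset (hXcl ⟨ha', hne⟩) hsupp_cl)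
      (mem_closure_insert_suppOf_sdiff hb₀)
  have ha''X : a'' ∈ M.closure X :=
    M.closure_subset_closure_of_subset_closure
      (insert_subset hb₀X ((sdiff_subset_sdiff_left suppOf_subset).trans hXcl))
      (mem_closure_insert_suppOf_sdiff ha''b₀)
  exact hA.indep.notMem_closure_sdiff_of_mem ha'' ha''X

theorem conn_not_singleton {α : Type*} (M : Matroid α) (A B : Set α)
    (hA : M.IsBase A) (hB : M.IsBase B) (hAB : Disjoint A B)
    (a' a'' : α) (ha' : a' ∈ A) (ha'' : a'' ∈ A) (hne : a' ≠ a'') :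
    {b ∈ B | b ∈ suppOf M B a' ∧ a'' ∈ suppOf M A b}.encard ≠ 1 :=
  conn_not_singleton_general M A B hA hAB a' a'' ha' ha'' hne
end

section
/- Let A and B be disjoint bases of a matroid M, and suppose a₁ ∈ A and b₁ ∈ B are symmetrically exchangeable (both A - a₁ + b₁ and B - b₁ + a₁ are bases). Let a₂ ∈ A, b₂ ∈ B with a₂ ≠ a₁, b₂ ≠ b₁, and B' = B - b₁ + a₁. If b₂ ∉ C(B,a₁) or b₁ ∉ C(B,a₂), then b₂ ∈ C(B',a₂) if and only if b₂ ∈ C(B,a₂). -/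
open Set

/-!
Put `D = B - b₁ - b₂`. For a base, `y ∈ C(B, x)` iff `x ∉ cl(B - y)`, so `b₂ ∈ C(B, a₂)` iff
`a₂ ∉ cl(D + b₁)` and `b₂ ∈ C(B', a₂)` iff `a₂ ∉ cl(D + a₁)`; moreover neither `a₁` nor `b₁` lies
in `cl(D + b₂) = cl(B - b₁)`, as `B'` and `B` are independent. If `b₂ ∉ C(B, a₁)`, then
`a₁ ∈ cl(D + b₁) - cl(D)`, so `D + a₁` and `D + b₁` span the same flat. If `b₁ ∉ C(B, a₂)`, then
`a₂ ∈ cl(D + b₂)`: either `a₂ ∈ cl(D)` and both conditions fail, or `D + a₂` spans `cl(D + b₂)`,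
and by the exchange property `a₂` lies in neither `cl(D + a₁)` nor `cl(D + b₁)`.
-/

namespace Matroid

variable {α : Type*} {M : Matroid α} {B I X : Set α} {a b e f x y : α}

lemma isCircuitOf_iff_isCircuit {C : Set α} : IsCircuitOf M C ↔ M.IsCircuit C := by
  rw [IsCircuit, Set.minimal_iff_forall_ssubset, IsCircuitOf]

lemma Indep.suppOf_eq_fundCircuit_inter (hI : M.Indep I) (hx : x ∈ M.closure I) (hxI : x ∉ I) :
    suppOf M I x = M.fundCircuit x I ∩ I := by
  ext y
  simp only [suppOf, isCircuitOf_iff_isCircuit, mem_inter_iff, mem_ofPred_eq]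
  refine ⟨fun ⟨hyI, C, hCI, hC, _, hyC⟩ ↦ ⟨hC.eq_fundCircuit_of_subset hI hCI ▸ hyC, hyI⟩,
    fun ⟨hyC, hyI⟩ ↦ ⟨hyI, _, M.fundCircuit_subset_insert x I,
      hI.fundCircuit_isCircuit hx hxI, M.mem_fundCircuit x I, hyC⟩⟩

lemma Indep.mem_suppOf_iff (hI : M.Indep I) (hx : x ∈ M.closure I) (hxI : x ∉ I) :
    y ∈ suppOf M I x ↔ y ∈ I ∧ x ∉ M.closure (I \ {y}) := by
  rw [hI.suppOf_eq_fundCircuit_inter hx hxI, mem_inter_iff, and_comm,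
    hI.mem_fundCircuit_iff hx hxI]
  refine and_congr_right fun hyI ↦ ?_
  rw [(hI.sdiff {y}).insert_sdiff_indep_iff hyI, or_iff_left hxI, mem_sdiff,
    and_iff_right (mem_ground_of_mem_closure hx)]

lemma IsBase.mem_suppOf_iff (hB : M.IsBase B) (hx : x ∈ M.E) (hxB : x ∉ B) :
    y ∈ suppOf M B x ↔ y ∈ B ∧ x ∉ M.closure (B \ {y}) :=
  hB.indep.mem_suppOf_iff (hB.closure_eq ▸ hx) hxB

lemma notMem_closure_insert_of_mem_closure_insert (ha : a ∈ M.closure (insert b X) \ M.closure X)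
    (he : e ∉ M.closure (insert b X)) : a ∉ M.closure (insert e X) := by
  rw [← closure_insert_congr ha] at he
  exact fun hae ↦ he (mem_closure_insert ha.2 hae)

lemma mem_closure_insert_iff_of_exchange (ha : a ∉ M.closure (insert f X))
    (hb : b ∉ M.closure (insert f X))
    (h : a ∈ M.closure (insert b X) ∨ e ∈ M.closure (insert f X)) :
    e ∈ M.closure (insert a X) ↔ e ∈ M.closure (insert b X) := by
  have haX : a ∉ M.closure X := fun haX ↦ ha (M.closure_subset_closure (subset_insert f X) haX)
  obtain hab | he := h
  · rw [closure_insert_congr ⟨hab, haX⟩]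
  by_cases heX : e ∈ M.closure X
  · exact iff_of_true (M.closure_subset_closure (subset_insert a X) heX)
      (M.closure_subset_closure (subset_insert b X) heX)
  · exact iff_of_false (notMem_closure_insert_of_mem_closure_insert ⟨he, heX⟩ ha)
      (notMem_closure_insert_of_mem_closure_insert ⟨he, heX⟩ hb)

end Matroid

theorem supp_invariance_exchange_general {α : Type*} (M : Matroid α) (A B : Set α)
    (hA : M.IsBase A) (hB : M.IsBase B) (hAB : Disjoint A B)
    (a₁ b₁ a₂ b₂ : α) (ha₁ : a₁ ∈ A) (hb₁ : b₁ ∈ B) (ha₂ : a₂ ∈ A) (hb₂ : b₂ ∈ B)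
    (hane : a₂ ≠ a₁) (hbne : b₂ ≠ b₁)
    (hex₂ : M.IsBase (insert a₁ (B \ {b₁})))
    (h : b₂ ∉ suppOf M B a₁ ∨ b₁ ∉ suppOf M B a₂) :
    b₂ ∈ suppOf M (insert a₁ (B \ {b₁})) a₂ ↔ b₂ ∈ suppOf M B a₂ := by
  have ha₁E : a₁ ∈ M.E := hA.subset_ground ha₁
  have ha₂E : a₂ ∈ M.E := hA.subset_ground ha₂
  have ha₁B : a₁ ∉ B := hAB.notMem_of_mem_left ha₁
  have ha₂B : a₂ ∉ B := hAB.notMem_of_mem_left ha₂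
  have ha₂B' : a₂ ∉ insert a₁ (B \ {b₁}) := by simp [hane, ha₂B]
  have hb₂B₁ : b₂ ∈ B \ {b₁} := mem_sdiff_singleton.2 ⟨hb₂, hbne⟩
  set D := (B \ {b₁}) \ {b₂}
  have hBb₁ : B \ {b₁} = insert b₂ D := by rw [insert_sdiff_singleton, insert_eq_of_mem hb₂B₁]
  have hBb₂ : B \ {b₂} = insert b₁ D := by
    rw [show D = (B \ {b₂}) \ {b₁} from Set.sdiff_sdiff_comm, insert_sdiff_singleton,
      insert_eq_of_mem (mem_sdiff_singleton.2 ⟨hb₁, hbne.symm⟩)]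
  have hB'b₂ : insert a₁ (B \ {b₁}) \ {b₂} = insert a₁ D :=
    insert_sdiff_of_notMem _ (ne_of_mem_of_not_mem hb₂ ha₁B).symm
  have hb₁D : b₁ ∉ M.closure (insert b₂ D) := hBb₁ ▸ hB.indep.notMem_closure_sdiff_of_mem hb₁
  have ha₁D : a₁ ∉ M.closure (insert b₂ D) := by
    have := hex₂.indep.notMem_closure_sdiff_of_mem (mem_insert a₁ (B \ {b₁}))
    rwa [insert_sdiff_self_of_notMem (fun h ↦ ha₁B (mem_sdiff_singleton.1 h).1), hBb₁] at this
  rw [hB.mem_suppOf_iff ha₁E ha₁B, hB.mem_suppOf_iff ha₂E ha₂B, hBb₁, hBb₂] at h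
  rw [hex₂.mem_suppOf_iff ha₂E ha₂B', hB.mem_suppOf_iff ha₂E ha₂B, hB'b₂, hBb₂,
    and_iff_right hb₂, and_iff_right (mem_insert_of_mem _ hb₂B₁)]
  exact not_congr <|
    Matroid.mem_closure_insert_iff_of_exchange ha₁D hb₁D (by simpa [hb₁, hb₂] using h)

theorem supp_invariance_exchange {α : Type*} (M : Matroid α) (A B : Set α)
    (hA : M.IsBase A) (hB : M.IsBase B) (hAB : Disjoint A B)
    (a₁ b₁ a₂ b₂ : α) (ha₁ : a₁ ∈ A) (hb₁ : b₁ ∈ B) (ha₂ : a₂ ∈ A) (hb₂ : b₂ ∈ B)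
    (hane : a₂ ≠ a₁) (hbne : b₂ ≠ b₁)
    (hex₁ : M.IsBase (insert b₁ (A \ {a₁}))) (hex₂ : M.IsBase (insert a₁ (B \ {b₁})))
    (h : b₂ ∉ suppOf M B a₁ ∨ b₁ ∉ suppOf M B a₂) :
    b₂ ∈ suppOf M (insert a₁ (B \ {b₁})) a₂ ↔ b₂ ∈ suppOf M B a₂ :=
  supp_invariance_exchange_general M A B hA hB hAB a₁ b₁ a₂ b₂ ha₁ hb₁ ha₂ hb₂ hane hbne hex₂ h
end

section
/- Let A and B be disjoint bases of a matroid, let a ∈ A, b ∈ B be symmetrically exchangeable, and set A' = A - a + b, B' = B - b + a. Let a₂ ∈ A, a₂ ≠ a. If a₂ is not symmetrically exchangeable relative to A' and B' with any element of B - b, then a₂ and a are symmetrically exchangeable relative to A' and B'; that is, a₂ ∈ C(A',a) and a ∈ C(B',a₂). -/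
open Set

/-!
Apply the single symmetric exchange property to `a₂ ∈ A' \ B'`: some `y ∈ B'` is symmetrically
exchangeable with `a₂`, and the hypothesis leaves only `y = a`. For a base `I` and `x ∉ I`,
`I - y + x` is a base exactly when `y` lies on the fundamental circuit of `x`, which gives the
two support memberships.
-/

namespace Matroid

variable {α : Type*} {M : Matroid α} {B B₁ B₂ C : Set α} {x y : α}

lemma IsCircuit.isCircuitOf (hC : M.IsCircuit C) : IsCircuitOf M C :=
  ⟨hC.dep, fun _ hDC hD => hDC.ne (isCircuit_iff.1 hC |>.2 hD hDC.subset)⟩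

lemma IsBase.isBase_insert_sdiff_iff_mem_fundCircuit (hB : M.IsBase B) (hxE : x ∈ M.E)
    (hxB : x ∉ B) (hyB : y ∈ B) :
    M.IsBase (insert x (B \ {y})) ↔ y ∈ M.fundCircuit x B := by
  rw [hB.indep.mem_fundCircuit_iff (by rwa [hB.closure_eq]) hxB,
    ← insert_sdiff_singleton_comm (ne_of_mem_of_not_mem hyB hxB).symm]
  exact ⟨IsBase.indep, hB.exchange_isBase_of_indep hxB⟩

lemma IsBase.mem_suppOf_of_isBase_exchange (hB : M.IsBase B) (hxE : x ∈ M.E) (hxB : x ∉ B)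
    (hyB : y ∈ B) (hexch : M.IsBase (insert x (B \ {y}))) : y ∈ suppOf M B x :=
  ⟨hyB, M.fundCircuit x B, M.fundCircuit_subset_insert x B,
    (hB.fundCircuit_isCircuit hxE hxB).isCircuitOf, M.mem_fundCircuit x B,
    (hB.isBase_insert_sdiff_iff_mem_fundCircuit hxE hxB hyB).1 hexch⟩

lemma IsBase.exists_symm_exchange (hB₁ : M.IsBase B₁) (hB₂ : M.IsBase B₂) (hxB₁ : x ∈ B₁)
    (hxB₂ : x ∉ B₂) :
    ∃ y ∈ B₂ \ B₁, M.IsBase (insert y (B₁ \ {x})) ∧ M.IsBase (insert x (B₂ \ {y})) := by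
  have hxE : x ∈ M.E := hB₁.subset_ground hxB₁
  have hC := hB₂.fundCircuit_isCircuit hxE hxB₂
  -- Otherwise `x ∈ cl (C - x) ⊆ cl (B₁ - x)` for the fundamental circuit `C` of `x` in `B₂`.
  obtain ⟨y, ⟨hyC, hyx⟩, hycl⟩ :
      ∃ y ∈ M.fundCircuit x B₂ \ {x}, y ∉ M.closure (B₁ \ {x}) := by
    by_contra! hsub
    refine hB₁.indep.notMem_closure_sdiff_of_mem hxB₁ ?_
    exact M.closure_subset_closure_of_subset_closure hsub
      (hC.mem_closure_sdiff_singleton_of_mem (M.mem_fundCircuit x B₂))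
  have hyB₂ : y ∈ B₂ := (M.fundCircuit_subset_insert x B₂ hyC).resolve_left hyx
  have hyB₁ : y ∉ B₁ := fun hy => hycl (M.mem_closure_of_mem ⟨hy, hyx⟩)
  exact ⟨y, ⟨hyB₂, hyB₁⟩,
    hB₁.exchange_base_of_notMem_closure hxB₁ hycl (hB₂.subset_ground hyB₂),
    (hB₂.isBase_insert_sdiff_iff_mem_fundCircuit hxE hxB₂ hyB₂).2 hyC⟩

end Matroid

theorem exchange_with_a_of_no_exchange_in_B_general {α : Type*} (M : Matroid α) (A B : Set α)
    (hAB : Disjoint A B)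
    (a b : α) (ha : a ∈ A) (hb : b ∈ B)
    (hex : M.IsBase (insert b (A \ {a})) ∧ M.IsBase (insert a (B \ {b})))
    (a₂ : α) (ha₂ : a₂ ∈ A) (hne : a₂ ≠ a)
    (hno : ¬ ∃ y ∈ B \ {b},
      M.IsBase (insert y ((insert b (A \ {a})) \ {a₂})) ∧
      M.IsBase (insert a₂ ((insert a (B \ {b})) \ {y}))) :
    (M.IsBase (insert a ((insert b (A \ {a})) \ {a₂})) ∧
        M.IsBase (insert a₂ ((insert a (B \ {b})) \ {a}))) ∧
      a₂ ∈ suppOf M (insert b (A \ {a})) a ∧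
      a ∈ suppOf M (insert a (B \ {b})) a₂ := by
  obtain ⟨hA', hB'⟩ := hex
  have ha₂A' : a₂ ∈ insert b (A \ {a}) := mem_insert_of_mem b ⟨ha₂, hne⟩
  have ha₂B' : a₂ ∉ insert a (B \ {b}) := by
    rintro (rfl | ⟨ha₂B, -⟩)
    exacts [hne rfl, hAB.notMem_of_mem_left ha₂ ha₂B]
  have haA' : a ∉ insert b (A \ {a}) := by
    rintro (rfl | ⟨-, haa⟩)
    exacts [hAB.notMem_of_mem_left ha hb, haa rfl]
  obtain ⟨y, ⟨hyB', -⟩, hexA', hexB'⟩ := hA'.exists_symm_exchange hB' ha₂A' ha₂B'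
  obtain rfl : y = a := by
    rcases hyB' with rfl | hyB
    · rfl
    · exact absurd ⟨y, hyB, hexA', hexB'⟩ hno
  exact ⟨⟨hexA', hexB'⟩,
    hA'.mem_suppOf_of_isBase_exchange (hB'.subset_ground (mem_insert y _)) haA' ha₂A' hexA',
    hB'.mem_suppOf_of_isBase_exchange (hA'.subset_ground ha₂A') ha₂B' (mem_insert y _) hexB'⟩

theorem exchange_with_a_of_no_exchange_in_B {α : Type*} (M : Matroid α) (A B : Set α)
    (hA : M.IsBase A) (hB : M.IsBase B) (hAB : Disjoint A B)
    (a b : α) (ha : a ∈ A) (hb : b ∈ B)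
    (hex : M.IsBase (insert b (A \ {a})) ∧ M.IsBase (insert a (B \ {b})))
    (a₂ : α) (ha₂ : a₂ ∈ A) (hne : a₂ ≠ a)
    (hno : ¬ ∃ y ∈ B \ {b},
      M.IsBase (insert y ((insert b (A \ {a})) \ {a₂})) ∧
      M.IsBase (insert a₂ ((insert a (B \ {b})) \ {y}))) :
    (M.IsBase (insert a ((insert b (A \ {a})) \ {a₂})) ∧
        M.IsBase (insert a₂ ((insert a (B \ {b})) \ {a}))) ∧
      a₂ ∈ suppOf M (insert b (A \ {a})) a ∧
      a ∈ suppOf M (insert a (B \ {b})) a₂ :=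
  exchange_with_a_of_no_exchange_in_B_general M A B hAB a b ha hb hex a₂ ha₂ hne hno
end
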